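/- arXiv:1309.7301 — 4 statements merged into one kernel-verified Lean document; each statement's English description precedes it below -/
import Mathlib

section
/- The 𝕜-algebra homomorphism 𝕜[t] → R̄ sending t to the class of xy is injective, and its image is exactly the invariant subring R̄^G. In particular, the invariant subring R̄^G is a polynomial ring in one variable over 𝕜, generated by xy. -/
/-!
Substituting `x = t ^ (n - k)`, `y = t ^ k` sends `xy` to the transcendental `t ^ n`, so
`t ↦ xy` is injective. A primitive root `ζ` acts on the monomial `x ^ a * y ^ b` by the scalar
`ζ ^ (a - b)`, so summing over the powers of `ζ` kills the monomials with `n ∤ a - b`; the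
surviving ones are polynomials in `xy`, because `x ^ n = (xy) ^ (n - k)` and `y ^ n = (xy) ^ k`.
An invariant `r` is `1 / n` times this sum.
-/

set_option maxHeartbeats 1000000
set_option synthInstance.maxHeartbeats 400000

noncomputable section

section Grass

variable (𝕜 : Type) [Field 𝕜] (n k : ℕ)

/-- The ring `R̄ = 𝕜[x,y]/(x^k - y^(n-k))`. -/
abbrev Rbar : Type :=
  MvPolynomial (Fin 2) 𝕜 ⧸
    Ideal.span {(MvPolynomial.X 0 : MvPolynomial (Fin 2) 𝕜) ^ k - MvPolynomial.X 1 ^ (n - k)}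

/-- The class of `x` in `R̄`. -/
def xbar : Rbar 𝕜 n k := Ideal.Quotient.mk _ (MvPolynomial.X 0)
/-- The class of `y` in `R̄`. -/
def ybar : Rbar 𝕜 n k := Ideal.Quotient.mk _ (MvPolynomial.X 1)

end Grass

open Polynomial Finset

theorem AlgEquiv.pow_apply_of_apply_eq_smul {R S : Type*} [CommSemiring R] [Semiring S]
    [Algebra R S] (τ : S ≃ₐ[R] S) {m : S} {w : R} (h : τ m = w • m) (i : ℕ) :
    (τ ^ i) m = w ^ i • m := by
  induction i with
  | zero => simp
  | succ i ih => rw [pow_succ, AlgEquiv.mul_apply, h, map_smul, ih, smul_smul, pow_succ']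

theorem IsPrimitiveRoot.geom_sum_zpow_eq_zero {K : Type*} [Field K] {ζ : K} {n : ℕ}
    (hζ : IsPrimitiveRoot ζ n) {j : ℤ} (hj : ¬ (n : ℤ) ∣ j) :
    ∑ i ∈ range n, (ζ ^ j) ^ i = 0 := by
  have hw : ζ ^ j ≠ 1 := fun h => hj ((hζ.zpow_eq_one_iff_dvd j).mp h)
  have hwn : (ζ ^ j) ^ n = 1 := by
    rw [← zpow_natCast, ← zpow_mul, mul_comm, zpow_mul, zpow_natCast, hζ.pow_eq_one, one_zpow]
  rw [geom_sum_eq hw, hwn, sub_self, zero_div]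

section Rbar

variable {𝕜 : Type} [Field 𝕜] {n k : ℕ}

local notation "x̄" => xbar 𝕜 n k
local notation "ȳ" => ybar 𝕜 n k

theorem mk_monomial_eq_smul (d : Fin 2 →₀ ℕ) (c : 𝕜) :
    (Ideal.Quotient.mk _ (MvPolynomial.monomial d c) : Rbar 𝕜 n k) = c • (x̄ ^ d 0 * ȳ ^ d 1) := by
  simp only [xbar, ybar, ← Ideal.Quotient.mkₐ_eq_mk 𝕜, ← map_pow, ← map_mul, ← map_smul]
  rw [MvPolynomial.monomial_eq, Finsupp.prod_fintype _ _ fun _ => pow_zero _, Fin.prod_univ_two,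
    MvPolynomial.smul_eq_C_mul]

theorem xbar_pow_eq_ybar_pow : x̄ ^ k = ȳ ^ (n - k) := by
  simp only [xbar, ybar, ← map_pow]
  exact Ideal.Quotient.eq.mpr (Ideal.mem_span_singleton_self _)

theorem xbar_pow_eq_xbar_mul_ybar_pow (hk : k ≤ n) : x̄ ^ n = (x̄ * ȳ) ^ (n - k) := by
  rw [mul_pow, ← xbar_pow_eq_ybar_pow, ← pow_add, Nat.sub_add_cancel hk]

theorem ybar_pow_eq_xbar_mul_ybar_pow (hk : k ≤ n) : ȳ ^ n = (x̄ * ȳ) ^ k := by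
  rw [mul_pow, xbar_pow_eq_ybar_pow, ← pow_add, Nat.sub_add_cancel hk]

theorem xbar_pow_mul_ybar_pow_mem_range (hk : k ≤ n) {a b : ℕ} (hab : (n : ℤ) ∣ a - b) :
    x̄ ^ a * ȳ ^ b ∈ (aeval (R := 𝕜) (x̄ * ȳ)).range := by
  have hxy : x̄ * ȳ ∈ (aeval (R := 𝕜) (x̄ * ȳ)).range := ⟨X, aeval_X _⟩
  have hba : b ≡ a [MOD n] := Nat.modEq_iff_dvd.mpr hab
  rcases le_total b a with h | h
  · obtain ⟨m, hm⟩ := (Nat.modEq_iff_dvd' h).mp hba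
    rw [show a = b + n * m by omega, pow_add, pow_mul, xbar_pow_eq_xbar_mul_ybar_pow hk,
      mul_right_comm, ← mul_pow]
    exact mul_mem (pow_mem hxy _) (pow_mem (pow_mem hxy _) _)
  · obtain ⟨m, hm⟩ := (Nat.modEq_iff_dvd' h).mp hba.symm
    rw [show b = a + n * m by omega, pow_add, pow_mul, ybar_pow_eq_xbar_mul_ybar_pow hk,
      ← mul_assoc, ← mul_pow]
    exact mul_mem (pow_mem hxy _) (pow_mem (pow_mem hxy _) _)

variable (𝕜 n k) in
def rbarToPolynomial : Rbar 𝕜 n k →ₐ[𝕜] 𝕜[X] :=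
  Ideal.Quotient.liftₐ _ (MvPolynomial.aeval ![X ^ (n - k), X ^ k]) fun _ ha =>
    RingHom.mem_ker.mp <| (Ideal.span_singleton_le_iff_mem _).mpr
      (by simp [← pow_mul, mul_comm k]) ha

theorem rbarToPolynomial_mk (p : MvPolynomial (Fin 2) 𝕜) :
    rbarToPolynomial 𝕜 n k (Ideal.Quotient.mk _ p) = MvPolynomial.aeval ![X ^ (n - k), X ^ k] p :=
  rfl

theorem rbarToPolynomial_xbar_mul_ybar (hk : k ≤ n) :
    rbarToPolynomial 𝕜 n k (x̄ * ȳ) = X ^ n := by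
  rw [map_mul, xbar, ybar, rbarToPolynomial_mk, rbarToPolynomial_mk]
  simp [← pow_add, Nat.sub_add_cancel hk]

theorem aeval_xbar_mul_ybar_injective (hn : n ≠ 0) (hk : k ≤ n) :
    Function.Injective (aeval (R := 𝕜) (x̄ * ȳ)) := by
  have h := aeval_algHom (rbarToPolynomial 𝕜 n k) (x̄ * ȳ)
  rw [rbarToPolynomial_xbar_mul_ybar hk] at h
  refine Function.Injective.of_comp (f := rbarToPolynomial 𝕜 n k) ?_
  rw [← AlgHom.coe_comp, ← h]
  exact transcendental_iff_injective.mp ((transcendental_X 𝕜).pow (Nat.pos_of_ne_zero hn))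

variable {ζ : 𝕜} {τ : Rbar 𝕜 n k ≃ₐ[𝕜] Rbar 𝕜 n k}

theorem apply_xbar_pow_mul_ybar_pow (hζ : ζ ≠ 0) (hτx : τ x̄ = ζ • x̄) (hτy : τ ȳ = ζ⁻¹ • ȳ)
    (a b : ℕ) : τ (x̄ ^ a * ȳ ^ b) = ζ ^ ((a : ℤ) - b) • (x̄ ^ a * ȳ ^ b) := by
  rw [map_mul, map_pow, map_pow, hτx, hτy, _root_.smul_pow, _root_.smul_pow, smul_mul_smul_comm,
    zpow_sub₀ hζ, zpow_natCast, zpow_natCast, inv_pow, div_eq_mul_inv]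

theorem sum_pow_apply_mem_range (hζ : IsPrimitiveRoot ζ n) (hn : n ≠ 0) (hk : k ≤ n)
    (hτx : τ x̄ = ζ • x̄) (hτy : τ ȳ = ζ⁻¹ • ȳ) (r : Rbar 𝕜 n k) :
    ∑ i ∈ range n, (τ ^ i) r ∈ (aeval (R := 𝕜) (x̄ * ȳ)).range := by
  obtain ⟨p, rfl⟩ := Ideal.Quotient.mk_surjective r
  induction p using MvPolynomial.induction_on' with
  | monomial d c =>
    have hτ := apply_xbar_pow_mul_ybar_pow (hζ.ne_zero hn) hτx hτy (d 0) (d 1)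
    simp only [mk_monomial_eq_smul, map_smul, AlgEquiv.pow_apply_of_apply_eq_smul _ hτ, ← smul_sum,
      ← sum_smul]
    refine Subalgebra.smul_mem _ ?_ c
    by_cases hab : (n : ℤ) ∣ d 0 - d 1
    · exact Subalgebra.smul_mem _ (xbar_pow_mul_ybar_pow_mem_range hk hab) _
    · rw [hζ.geom_sum_zpow_eq_zero hab, zero_smul]
      exact zero_mem _
  | add p q hp hq =>
    simp only [map_add, sum_add_distrib]
    exact add_mem hp hq

end Rbar

theorem statement_0_general
    (𝕜 : Type) [Field 𝕜] (n k : ℕ)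
    (hkn : k ≤ n - 1)
    (hchar : ¬ (ringChar 𝕜 ∣ n)) (hprim : ∃ ζ : 𝕜, IsPrimitiveRoot ζ n)
    (σ : rootsOfUnity n 𝕜 →* (Rbar 𝕜 n k ≃ₐ[𝕜] Rbar 𝕜 n k))
    (hx : ∀ ζ : rootsOfUnity n 𝕜, σ ζ (xbar 𝕜 n k) = ((ζ : 𝕜ˣ) : 𝕜) • xbar 𝕜 n k)
    (hy : ∀ ζ : rootsOfUnity n 𝕜,
      σ ζ (ybar 𝕜 n k) = (((ζ : 𝕜ˣ)⁻¹ : 𝕜ˣ) : 𝕜) • ybar 𝕜 n k) :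
    Function.Injective
      (Polynomial.aeval (xbar 𝕜 n k * ybar 𝕜 n k) : Polynomial 𝕜 →ₐ[𝕜] Rbar 𝕜 n k) ∧
    Set.range
      (Polynomial.aeval (xbar 𝕜 n k * ybar 𝕜 n k) : Polynomial 𝕜 →ₐ[𝕜] Rbar 𝕜 n k) =
      {r : Rbar 𝕜 n k | ∀ ζ : rootsOfUnity n 𝕜, σ ζ r = r} := by
  have hn₀ : (n : 𝕜) ≠ 0 := fun h => hchar ((CharP.cast_eq_zero_iff 𝕜 (ringChar 𝕜) n).mp h)
  have hn : n ≠ 0 := by rintro rfl; exact hn₀ Nat.cast_zero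
  have hk : k ≤ n := hkn.trans (Nat.sub_le n 1)
  have hy' (g : rootsOfUnity n 𝕜) : σ g (ybar 𝕜 n k) = ((g : 𝕜ˣ) : 𝕜)⁻¹ • ybar 𝕜 n k := by
    rw [hy, Units.val_inv_eq_inv_val]
  refine ⟨aeval_xbar_mul_ybar_injective hn hk,
    Set.ext fun r => ⟨?_, fun (hr : ∀ g, σ g r = r) => ?_⟩⟩
  · rintro ⟨p, rfl⟩ g
    have hxy : σ g (xbar 𝕜 n k * ybar 𝕜 n k) = xbar 𝕜 n k * ybar 𝕜 n k := by
      simpa using apply_xbar_pow_mul_ybar_pow (g : 𝕜ˣ).ne_zero (hx g) (hy' g) 1 1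
    rw [← AlgEquiv.coe_toAlgHom, ← aeval_algHom_apply, AlgEquiv.coe_toAlgHom, hxy]
  · obtain ⟨ζ, hζ⟩ := hprim
    have : NeZero n := ⟨hn⟩
    have hmem := sum_pow_apply_mem_range hζ hn hk
      (by rw [hx, hζ.val_toRootsOfUnity_coe]) (by rw [hy', hζ.val_toRootsOfUnity_coe]) r
    have hsum : ∑ i ∈ range n, (σ hζ.toRootsOfUnity ^ i) r = (n : 𝕜) • r := by
      simp [← map_pow, hr, Nat.cast_smul_eq_nsmul]
    rw [hsum] at hmem
    simpa [hn₀] using Subalgebra.smul_mem _ hmem (n : 𝕜)⁻¹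

/-- The `𝕜`-algebra homomorphism `𝕜[t] → R̄`, `t ↦ xy`, is injective, and its image
is exactly the invariant subring `R̄^G` for the action of the group `G = μ_n(𝕜)` of
`n`-th roots of unity acting by `ζ·x = ζx`, `ζ·y = ζ⁻¹y`.  In particular `R̄^G` is a
polynomial ring in one variable over `𝕜`, generated by `xy`. -/
theorem statement_0
    (𝕜 : Type) [Field 𝕜] (n k : ℕ)
    (hk1 : 1 ≤ k) (hkn : k ≤ n - 1)
    (hchar : ¬ (ringChar 𝕜 ∣ n)) (hprim : ∃ ζ : 𝕜, IsPrimitiveRoot ζ n)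
    (σ : rootsOfUnity n 𝕜 →* (Rbar 𝕜 n k ≃ₐ[𝕜] Rbar 𝕜 n k))
    (hx : ∀ ζ : rootsOfUnity n 𝕜, σ ζ (xbar 𝕜 n k) = ((ζ : 𝕜ˣ) : 𝕜) • xbar 𝕜 n k)
    (hy : ∀ ζ : rootsOfUnity n 𝕜,
      σ ζ (ybar 𝕜 n k) = (((ζ : 𝕜ˣ)⁻¹ : 𝕜ˣ) : 𝕜) • ybar 𝕜 n k) :
    Function.Injective
      (Polynomial.aeval (xbar 𝕜 n k * ybar 𝕜 n k) : Polynomial 𝕜 →ₐ[𝕜] Rbar 𝕜 n k) ∧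
    Set.range
      (Polynomial.aeval (xbar 𝕜 n k * ybar 𝕜 n k) : Polynomial 𝕜 →ₐ[𝕜] Rbar 𝕜 n k) =
      {r : Rbar 𝕜 n k | ∀ ζ : rootsOfUnity n 𝕜, σ ζ r = r} :=
  statement_0_general 𝕜 n k hkn hchar hprim σ hx hy
end
end

section
/- For each j ∈ {0,1,…,n−1}, the eigenspace R̄_j = {r ∈ R̄ : ζ·r = ζ^j r for all ζ ∈ G} is a free module of rank one over Z̄ = 𝕜[xy], generated by x^j when 0 ≤ j ≤ k and by y^{n−j} when k ≤ j ≤ n−1 (the two generators agreeing when j = k, since x^k = y^{n−k} in R̄). Consequently R̄ = ⊕_{j=0}^{n−1} R̄_j and R̄ is a free Z̄-module of rank n. -/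
/-
Over `𝕜[y]`, `R̄ = 𝕜[y][x]/(x^k - y^(n-k))` is free on `1, x, …, x^(k-1)`, so the monomials
`x^a y^b` with `a < k` form a `𝕜`-basis. With `t = xy`, the products `t^i · egen j` are exactly the
monomials `x^A y^B` in the band `-(n-k) < A - B ≤ k`. Reducing `x^A y^B` by `x^k = y^(n-k)` changes
`A - B` by multiples of `n`, the width of the band, so distinct band monomials reduce to distinct
basis monomials; conversely every monomial can be shifted into the band. Hence the `t^i · egen j`
form a `𝕜`-basis of `R̄`, which says that the `egen j` form a basis over `𝕜[t] = Z̄`. Finally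
`t^i · egen j` is a `ζ^j`-eigenvector of `ζ`, and the `ζ^j` are distinct for a primitive `ζ`, so
uniqueness of coordinates cuts the `ζ^j`-eigenspace down to `Z̄ · egen j`.
-/

set_option maxHeartbeats 1000000
set_option synthInstance.maxHeartbeats 400000

noncomputable section

section Grass

variable (𝕜 : Type) [Field 𝕜] (n k : ℕ)

/-- `Z̄ = 𝕜[xy] ⊆ R̄`, the `𝕜`-subalgebra generated by `xy`. -/
def Zbar : Subalgebra 𝕜 (Rbar 𝕜 n k) := Algebra.adjoin 𝕜 {xbar 𝕜 n k * ybar 𝕜 n k}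

/-- The generator of the eigenspace `R̄_j`: `x^j` for `0 ≤ j ≤ k` and `y^(n-j)` for
`k ≤ j ≤ n-1` (these agree when `j = k`, since `x^k = y^(n-k)` in `R̄`). -/
def egen (j : ℕ) : Rbar 𝕜 n k := if j ≤ k then xbar 𝕜 n k ^ j else ybar 𝕜 n k ^ (n - j)

end Grass

open Polynomial

theorem Nat.eq_of_mod_eq_of_add_mul_div_eq {k m A B A' B' : ℕ} (hmod : A % k = A' % k)
    (hdiv : B + m * (A / k) = B' + m * (A' / k)) (h : A ≤ B + k) (hm : B < A + m)
    (h' : A' ≤ B' + k) (hm' : B' < A' + m) : A = A' ∧ B = B' := by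
  -- `A - B` and `A' - B'` lie in a window of width `k + m` but differ by `(k + m) (A/k - A'/k)`.
  have hA := Nat.div_add_mod A k
  have hA' := Nat.div_add_mod A' k
  rcases lt_trichotomy (A / k) (A' / k) with hlt | heq | hgt
  · have := Nat.mul_le_mul_left k hlt
    have := Nat.mul_le_mul_left m hlt
    rw [Nat.mul_succ] at *
    omega
  · rw [heq] at hA hdiv
    omega
  · have := Nat.mul_le_mul_left k hgt
    have := Nat.mul_le_mul_left m hgt
    rw [Nat.mul_succ] at *
    omega

section FreeOverAdjoin

variable {R A ι : Type*} [CommRing R] [CommRing A] [Algebra R A] [Fintype ι]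

def polyCombination (t : A) (e : ι → A) : (ι → R[X]) →ₗ[R] A where
  toFun p := ∑ j, aeval t (p j) * e j
  map_add' p q := by simp only [Pi.add_apply, map_add, add_mul, Finset.sum_add_distrib]
  map_smul' c p := by simp only [Pi.smul_apply, map_smul, smul_mul_assoc, Finset.smul_sum,
    RingHom.id_apply]

variable [DecidableEq ι]

theorem polyCombination_single (t : A) (e : ι → A) (j : ι) (p : R[X]) :
    polyCombination t e (Pi.single j p) = aeval t p * e j := by
  rw [polyCombination, LinearMap.coe_mk, AddHom.coe_mk, Finset.sum_eq_single j
    (fun j' _ hj' => by rw [Pi.single_eq_of_ne hj', map_zero, zero_mul]) (by simp),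
    Pi.single_eq_same]

theorem bijective_polyCombination {t : A} {e : ι → A} (b : Module.Basis (ι × ℕ) R A)
    (hb : ∀ j i, b (j, i) = t ^ i * e j) : Function.Bijective (polyCombination (R := R) t e) := by
  let P := Pi.basis fun _ : ι => basisMonomials R
  have : polyCombination t e = (P.equiv b (Equiv.sigmaEquivProd ι ℕ)).toLinearMap := by
    refine P.ext fun ⟨j, i⟩ => ?_
    rw [LinearEquiv.coe_coe, Module.Basis.equiv_apply]
    simp [P, polyCombination_single, hb]
  rw [this]
  exact LinearEquiv.bijective _

theorem existsUnique_sum_mul_of_basis {t : A} {e : ι → A} (b : Module.Basis (ι × ℕ) R A)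
    (hb : ∀ j i, b (j, i) = t ^ i * e j) (r : A) :
    ∃! c : ι → Algebra.adjoin R {t}, r = ∑ j, (c j : A) * e j := by
  let toAdjoin (p : R[X]) : Algebra.adjoin R {t} := ⟨aeval t p, aeval_mem_adjoin_singleton R t⟩
  have hsurj : Function.Surjective toAdjoin := by
    rintro ⟨a, ha⟩
    rw [Algebra.adjoin_singleton_eq_range_aeval] at ha
    obtain ⟨p, rfl⟩ := ha
    exact ⟨p, rfl⟩
  let combine (c : ι → Algebra.adjoin R {t}) : A := ∑ j, (c j : A) * e j
  have hbij : Function.Bijective (combine ∘ Pi.map fun _ => toAdjoin) :=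
    bijective_polyCombination b hb
  have hcombine : Function.Bijective combine :=
    ⟨hbij.1.of_comp_right (Function.Surjective.piMap fun _ => hsurj), hbij.2.of_comp⟩
  simpa only [eq_comm] using hcombine.existsUnique r

end FreeOverAdjoin

theorem exists_mem_eq_mul_of_apply_eq_smul {K A ι : Type*} [Field K] [CommRing A] [Algebra K A]
    [Fintype ι] [DecidableEq ι] {Z : Subalgebra K A} {e : ι → A}
    (hdecomp : ∀ r : A, ∃! c : ι → Z, r = ∑ j, (c j : A) * e j)
    {f : A →ₗ[K] A} {μ : ι → K} (hμ : Function.Injective μ)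
    (hf : ∀ z ∈ Z, ∀ j, f (z * e j) = μ j • (z * e j)) {j : ι} {r : A} (hr : f r = μ j • r) :
    ∃ z ∈ Z, r = z * e j := by
  obtain ⟨c, hc, -⟩ := hdecomp r
  have hfr : f r = ∑ j', ((μ j' • c j' : Z) : A) * e j' := by
    simp only [hc, map_sum, hf _ (c _).2, Subalgebra.coe_smul, smul_mul_assoc]
  have hμr : f r = ∑ j', ((μ j • c j' : Z) : A) * e j' := by
    rw [hr, hc, Finset.smul_sum]
    simp only [Subalgebra.coe_smul, smul_mul_assoc]
  have hcoeff : (fun j' => μ j' • c j') = fun j' => μ j • c j' :=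
    (hdecomp (f r)).unique hfr hμr
  have hvanish : ∀ j' ≠ j, c j' = 0 := fun j' hj' => by
    have h := congrFun hcoeff j'
    rwa [← sub_eq_zero, ← sub_smul, smul_eq_zero, sub_eq_zero, hμ.eq_iff, or_iff_right hj'] at h
  refine ⟨c j, (c j).2, ?_⟩
  rw [hc, Finset.sum_eq_single j (fun j' _ hj' => by rw [hvanish j' hj', ZeroMemClass.coe_zero,
    zero_mul]) (by simp)]

namespace Rbar

variable (𝕜 : Type) [Field 𝕜] (n k : ℕ)

def toBivariate : MvPolynomial (Fin 2) 𝕜 ≃ₐ[𝕜] 𝕜[X][X] :=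
  AlgEquiv.ofAlgHom (MvPolynomial.aeval ![X, C X])
    (aevalTower (aeval (MvPolynomial.X 1)) (MvPolynomial.X 0))
    (algHom_ext' (algHom_ext (by simp)) (by simp))
    (MvPolynomial.algHom_ext fun i => by fin_cases i <;> simp)

def equivAdjoinRoot : Rbar 𝕜 n k ≃ₐ[𝕜] AdjoinRoot (X ^ k - C (X ^ (n - k)) : 𝕜[X][X]) :=
  Ideal.quotientEquivAlg _ _ (toBivariate 𝕜) (by
    rw [Ideal.map_span, Set.image_singleton]
    simp [toBivariate])

variable {𝕜 n k}

def monomialBasis (hk : 0 < k) : Module.Basis (ℕ × Fin k) 𝕜 (Rbar 𝕜 n k) :=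
  (((basisMonomials 𝕜).smulTower
    (AdjoinRoot.powerBasis' (monic_X_pow_sub_C (X ^ (n - k) : 𝕜[X]) hk.ne')).basis).reindex
    (Equiv.prodCongr (Equiv.refl ℕ) (finCongr natDegree_X_pow_sub_C))).map
    (equivAdjoinRoot 𝕜 n k).symm.toLinearEquiv

theorem monomialBasis_apply (hk : 0 < k) (b : ℕ) (a : Fin k) :
    monomialBasis (n := n) hk (b, a) = xbar 𝕜 n k ^ (a : ℕ) * ybar 𝕜 n k ^ b := by
  have hsymm (p : 𝕜[X][X]) : (equivAdjoinRoot 𝕜 n k).symm.toLinearEquiv (AdjoinRoot.mk _ p) =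
      Ideal.Quotient.mk _ ((toBivariate 𝕜).symm p) := rfl
  simp only [monomialBasis, Module.Basis.map_apply, Module.Basis.reindex_apply,
    Module.Basis.smulTower_apply, PowerBasis.basis_eq_pow, AdjoinRoot.powerBasis'_gen,
    coe_basisMonomials]
  rw [Algebra.smul_def, AdjoinRoot.algebraMap_eq, ← AdjoinRoot.mk_C, AdjoinRoot.root, ← map_pow,
    ← map_mul, hsymm]
  simp only [toBivariate, AlgEquiv.ofAlgHom_symm_apply, map_mul, map_pow, aevalTower_C,
    aevalTower_X, aeval_monomial, MvPolynomial.algebraMap_eq, MvPolynomial.C_1, one_mul, xbar, ybar]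
  exact mul_comm _ _

theorem xbar_pow_k : xbar 𝕜 n k ^ k = ybar 𝕜 n k ^ (n - k) := by
  rw [xbar, ybar, ← map_pow, ← map_pow, Ideal.Quotient.eq]
  exact Ideal.subset_span rfl

theorem xbar_pow_mul_ybar_pow (hk : 0 < k) (A B : ℕ) :
    xbar 𝕜 n k ^ A * ybar 𝕜 n k ^ B =
      monomialBasis hk (B + (n - k) * (A / k), ⟨A % k, Nat.mod_lt A hk⟩) := by
  rw [monomialBasis_apply]
  conv_lhs => rw [← Nat.div_add_mod A k, pow_add, pow_mul, xbar_pow_k, ← pow_mul]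
  ring

variable (k) in
def exponents (p : Fin n × ℕ) : ℕ × ℕ :=
  if (p.1 : ℕ) ≤ k then (p.2 + p.1, p.2) else (p.2, p.2 + (n - p.1))

theorem pow_mul_egen (p : Fin n × ℕ) :
    (xbar 𝕜 n k * ybar 𝕜 n k) ^ p.2 * egen 𝕜 n k p.1 =
      xbar 𝕜 n k ^ (exponents k p).1 * ybar 𝕜 n k ^ (exponents k p).2 := by
  unfold exponents egen
  split_ifs <;> ring

theorem exponents_injective : Function.Injective (exponents (n := n) k) := by
  rintro ⟨j, i⟩ ⟨j', i'⟩ h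
  have := j.isLt
  have := j'.isLt
  simp only [exponents] at h
  split_ifs at h <;> simp only [Prod.mk.injEq, Fin.ext_iff] at h ⊢ <;> omega

theorem exponents_mem_band (hkn : k < n) (p : Fin n × ℕ) :
    (exponents k p).1 ≤ (exponents k p).2 + k ∧
      (exponents k p).2 < (exponents k p).1 + (n - k) := by
  have := p.1.isLt
  unfold exponents
  split_ifs <;> omega

theorem exists_exponents_eq (hkn : k < n) {A B : ℕ} (h : A ≤ B + k) (hm : B < A + (n - k)) :
    ∃ p : Fin n × ℕ, exponents k p = (A, B) := by
  rcases le_or_gt B A with hBA | hAB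
  · refine ⟨(⟨A - B, by omega⟩, B), ?_⟩
    simp only [exponents, if_pos (show A - B ≤ k by omega)]
    congr 1; omega
  · refine ⟨(⟨n - (B - A), by omega⟩, A), ?_⟩
    simp only [exponents, if_neg (show ¬ n - (B - A) ≤ k by omega)]
    congr 1; omega

theorem linearIndependent_pow_mul_egen (hk : 0 < k) (hkn : k < n) :
    LinearIndependent 𝕜
      fun p : Fin n × ℕ => (xbar 𝕜 n k * ybar 𝕜 n k) ^ p.2 * egen 𝕜 n k p.1 := by
  let idx (p : Fin n × ℕ) : ℕ × Fin k :=
    ((exponents k p).2 + (n - k) * ((exponents k p).1 / k),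
      ⟨(exponents k p).1 % k, Nat.mod_lt _ hk⟩)
  have hidx : Function.Injective idx := fun p p' h => by
    simp only [idx, Prod.mk.injEq, Fin.mk.injEq] at h
    obtain ⟨hp, hp'⟩ := exponents_mem_band hkn p
    obtain ⟨hq, hq'⟩ := exponents_mem_band hkn p'
    exact exponents_injective
      (Prod.ext_iff.2 (Nat.eq_of_mod_eq_of_add_mul_div_eq h.2 h.1 hp hp' hq hq'))
  convert (monomialBasis hk).linearIndependent.comp idx hidx with p
  rw [Function.comp_apply, pow_mul_egen, xbar_pow_mul_ybar_pow hk]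

theorem span_pow_mul_egen (hk : 0 < k) (hkn : k < n) :
    ⊤ ≤ Submodule.span 𝕜
      (Set.range fun p : Fin n × ℕ => (xbar 𝕜 n k * ybar 𝕜 n k) ^ p.2 * egen 𝕜 n k p.1) := by
  set S := Submodule.span 𝕜
      (Set.range fun p : Fin n × ℕ => (xbar 𝕜 n k * ybar 𝕜 n k) ^ p.2 * egen 𝕜 n k p.1)
  have hmonomial (B : ℕ) : ∀ A, A ≤ B + k → xbar 𝕜 n k ^ A * ybar 𝕜 n k ^ B ∈ S := by
    induction B using Nat.strong_induction_on with
    | _ B ih =>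
      intro A hA
      by_cases hm : B < A + (n - k)
      · obtain ⟨p, hp⟩ := exists_exponents_eq hkn hA hm
        exact Submodule.subset_span ⟨p, (pow_mul_egen p).trans (by rw [hp])⟩
      · have hshift : xbar 𝕜 n k ^ A * ybar 𝕜 n k ^ B =
            xbar 𝕜 n k ^ (A + k) * ybar 𝕜 n k ^ (B - (n - k)) := by
          rw [pow_add, xbar_pow_k, mul_assoc, ← pow_add, Nat.add_sub_cancel' (by omega)]
        rw [hshift]
        exact ih _ (by omega) _ (by omega)
  rw [← (monomialBasis (n := n) hk).span_eq, Submodule.span_le]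
  rintro _ ⟨⟨b, a⟩, rfl⟩
  rw [monomialBasis_apply]
  exact hmonomial b a (by omega)

def zbarBasis (hk : 0 < k) (hkn : k < n) : Module.Basis (Fin n × ℕ) 𝕜 (Rbar 𝕜 n k) :=
  Module.Basis.mk (linearIndependent_pow_mul_egen hk hkn) (span_pow_mul_egen hk hkn)

theorem zbarBasis_apply (hk : 0 < k) (hkn : k < n) (j : Fin n) (i : ℕ) :
    zbarBasis hk hkn (j, i) = (xbar 𝕜 n k * ybar 𝕜 n k) ^ i * egen 𝕜 n k j :=
  Module.Basis.mk_apply _ _ _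

section Automorphism

variable {φ : Rbar 𝕜 n k →ₐ[𝕜] Rbar 𝕜 n k} {u : 𝕜ˣ}
  (hx : φ (xbar 𝕜 n k) = (u : 𝕜) • xbar 𝕜 n k)
  (hy : φ (ybar 𝕜 n k) = ((u⁻¹ : 𝕜ˣ) : 𝕜) • ybar 𝕜 n k)
include hx hy

theorem apply_eq_self_of_mem_zbar {z : Rbar 𝕜 n k} (hz : z ∈ Zbar 𝕜 n k) : φ z = z := by
  have hxy : φ (xbar 𝕜 n k * ybar 𝕜 n k) = xbar 𝕜 n k * ybar 𝕜 n k := by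
    rw [map_mul, hx, hy, smul_mul_smul_comm, ← Units.val_mul, mul_inv_cancel, Units.val_one,
      one_smul]
  exact AlgHom.adjoin_le_equalizer φ (AlgHom.id 𝕜 _) (Set.eqOn_singleton.2 hxy) hz

theorem apply_egen (hu : u ^ n = 1) {j : ℕ} (hj : j < n) :
    φ (egen 𝕜 n k j) = ((u : 𝕜) ^ j) • egen 𝕜 n k j := by
  unfold egen
  split_ifs
  · rw [map_pow, hx, _root_.smul_pow]
  · have hinv : u ^ j = (u ^ (n - j))⁻¹ :=
      eq_inv_of_mul_eq_one_left (by rw [← pow_add, Nat.add_sub_cancel' hj.le, hu])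
    rw [map_pow, hy, _root_.smul_pow, ← Units.val_pow_eq_pow_val, ← Units.val_pow_eq_pow_val,
      inv_pow, hinv]

theorem apply_mul_egen (hu : u ^ n = 1) {z : Rbar 𝕜 n k} (hz : z ∈ Zbar 𝕜 n k) {j : ℕ}
    (hj : j < n) :
    φ (z * egen 𝕜 n k j) = ((u : 𝕜) ^ j) • (z * egen 𝕜 n k j) := by
  rw [map_mul, apply_eq_self_of_mem_zbar hx hy hz, apply_egen hx hy hu hj, mul_smul_comm]

end Automorphism

end Rbar

theorem statement_1_general
    (𝕜 : Type) [Field 𝕜] (n k : ℕ)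
    (hk1 : 1 ≤ k) (hkn : k ≤ n - 1)
    (hprim : ∃ ζ : 𝕜, IsPrimitiveRoot ζ n)
    (σ : rootsOfUnity n 𝕜 →* (Rbar 𝕜 n k ≃ₐ[𝕜] Rbar 𝕜 n k))
    (hx : ∀ ζ : rootsOfUnity n 𝕜, σ ζ (xbar 𝕜 n k) = ((ζ : 𝕜ˣ) : 𝕜) • xbar 𝕜 n k)
    (hy : ∀ ζ : rootsOfUnity n 𝕜,
      σ ζ (ybar 𝕜 n k) = (((ζ : 𝕜ˣ)⁻¹ : 𝕜ˣ) : 𝕜) • ybar 𝕜 n k) :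
    (∀ j : Fin n,
      {r : Rbar 𝕜 n k | ∀ ζ : rootsOfUnity n 𝕜, σ ζ r = (((ζ : 𝕜ˣ) : 𝕜) ^ (j : ℕ)) • r} =
        {r : Rbar 𝕜 n k | ∃ z ∈ Zbar 𝕜 n k, r = z * egen 𝕜 n k (j : ℕ)}) ∧
    (∀ r : Rbar 𝕜 n k, ∃! c : Fin n → ↥(Zbar 𝕜 n k),
      r = ∑ j : Fin n, (c j : Rbar 𝕜 n k) * egen 𝕜 n k (j : ℕ)) := by
  have hkn' : k < n := by omega
  have hdecomp : ∀ r : Rbar 𝕜 n k, ∃! c : Fin n → ↥(Zbar 𝕜 n k),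
      r = ∑ j : Fin n, (c j : Rbar 𝕜 n k) * egen 𝕜 n k (j : ℕ) :=
    existsUnique_sum_mul_of_basis (Rbar.zbarBasis hk1 hkn') (Rbar.zbarBasis_apply hk1 hkn')
  have hσ (ζ : rootsOfUnity n 𝕜) {z} (hz : z ∈ Zbar 𝕜 n k) (j : Fin n) :
      σ ζ (z * egen 𝕜 n k j) = (((ζ : 𝕜ˣ) : 𝕜) ^ (j : ℕ)) • (z * egen 𝕜 n k j) :=
    Rbar.apply_mul_egen (φ := (σ ζ).toAlgHom) (hx ζ) (hy ζ) ((mem_rootsOfUnity n _).1 ζ.2) hz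
      j.isLt
  refine ⟨fun j => Set.ext fun r => ⟨fun hr => ?_, ?_⟩, hdecomp⟩
  · obtain ⟨ζ, hζ⟩ := hprim
    have : NeZero n := ⟨by omega⟩
    have hμ : Function.Injective fun j : Fin n => ζ ^ (j : ℕ) :=
      fun j j' h => Fin.ext (hζ.pow_inj j.isLt j'.isLt h)
    obtain ⟨ζ₀, hζ₀⟩ : ∃ ζ₀ : rootsOfUnity n 𝕜, ((ζ₀ : 𝕜ˣ) : 𝕜) = ζ :=
      ⟨hζ.toRootsOfUnity, hζ.val_toRootsOfUnity_coe⟩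
    subst hζ₀
    exact exists_mem_eq_mul_of_apply_eq_smul hdecomp hμ (f := (σ ζ₀).toLinearMap)
      (fun z hz j => hσ ζ₀ hz j) (hr ζ₀)
  · rintro ⟨z, hz, rfl⟩ ζ
    exact hσ ζ hz j

/-- For each `j ∈ {0, …, n-1}`, the eigenspace `R̄_j = {r | ζ·r = ζ^j r}` is a free
rank one `Z̄`-module generated by `x^j` (for `j ≤ k`) resp. `y^(n-j)` (for `k ≤ j`),
and `R̄ = ⊕_{j=0}^{n-1} R̄_j` is a free `Z̄`-module of rank `n`: every element of `R̄`
is uniquely a `Z̄`-linear combination of the generators. -/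
theorem statement_1
    (𝕜 : Type) [Field 𝕜] (n k : ℕ)
    (hk1 : 1 ≤ k) (hkn : k ≤ n - 1)
    (hchar : ¬ (ringChar 𝕜 ∣ n)) (hprim : ∃ ζ : 𝕜, IsPrimitiveRoot ζ n)
    (σ : rootsOfUnity n 𝕜 →* (Rbar 𝕜 n k ≃ₐ[𝕜] Rbar 𝕜 n k))
    (hx : ∀ ζ : rootsOfUnity n 𝕜, σ ζ (xbar 𝕜 n k) = ((ζ : 𝕜ˣ) : 𝕜) • xbar 𝕜 n k)
    (hy : ∀ ζ : rootsOfUnity n 𝕜,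
      σ ζ (ybar 𝕜 n k) = (((ζ : 𝕜ˣ)⁻¹ : 𝕜ˣ) : 𝕜) • ybar 𝕜 n k) :
    (∀ j : Fin n,
      {r : Rbar 𝕜 n k | ∀ ζ : rootsOfUnity n 𝕜, σ ζ r = (((ζ : 𝕜ˣ) : 𝕜) ^ (j : ℕ)) • r} =
        {r : Rbar 𝕜 n k | ∃ z ∈ Zbar 𝕜 n k, r = z * egen 𝕜 n k (j : ℕ)}) ∧
    (∀ r : Rbar 𝕜 n k, ∃! c : Fin n → ↥(Zbar 𝕜 n k),
      r = ∑ j : Fin n, (c j : Rbar 𝕜 n k) * egen 𝕜 n k (j : ℕ)) :=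
  statement_1_general 𝕜 n k hk1 hkn hprim σ hx hy
end
end

section
/- The vectors α_1, …, α_{n−1}, β_{[n]} form a ℤ-basis of the lattice ℤⁿ(k). With respect to this basis the symmetric bilinear form b has Gram matrix equal to the Cartan matrix C of the graph J_{k,n}: writing v_j = α_j for 1 ≤ j ≤ n−1 and v_n = β_{[n]}, one has b(v_i, v_j) = C_{ij} for all i, j. Moreover, for x = Σ_j c_j v_j one has δ(x) = c_n, and q(β_I) = 2 for every k-element subset I ⊆ {1,…,n}. -/
/-!
Prefix sums make the basis triangular. For `j < n - 1`, the sum of the first `j + 1`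
coordinates of `Σ_l c_l v_l` is `min(j + 1, k) c_n - c_j`, and the sum of all coordinates
is `k c_n`. So the coefficients of `x` can be read off from its prefix sums, which gives
uniqueness. When `k ∣ Σ x_i`, the coefficients defined this way give a vector with the same
prefix sums as `x`, which gives existence. On `ℤⁿ(k)`, `δ` is additive, so
`q(u + w) - q(u) - q(w) = 2 (u ⬝ w + (2 - k) δ(u) δ(w))`. The Gram matrix then follows
from `α_j ⬝ f = f_{j+1} - f_j`.
-/

open Matrix

namespace JLattice

variable {n k : ℕ}

theorem sum_ite_val_eq {M : Type*} [AddCommMonoid M] (f : Fin n → M) {m : ℕ} (hm : m < n) :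
    ∑ j : Fin n, (if (j : ℕ) = m then f j else 0) = f ⟨m, hm⟩ := by
  rw [Finset.sum_eq_single_of_mem ⟨m, hm⟩ (Finset.mem_univ _) fun j _ hj => if_neg ?_, if_pos rfl]
  exact fun h => hj (Fin.ext h)

theorem sum_apply_sum_smul {ι κ R : Type*} [Fintype ι] [CommSemiring R] (s : Finset κ)
    (c : ι → R) (w : ι → κ → R) :
    ∑ i ∈ s, (∑ j, c j • w j) i = ∑ j, c j * ∑ i ∈ s, w j i := by
  simp only [Finset.sum_apply, Pi.smul_apply, smul_eq_mul, Finset.mul_sum]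
  exact Finset.sum_comm

def alpha (n j : ℕ) : Fin n → ℤ :=
  fun i => (if (i : ℕ) = j + 1 then 1 else 0) - (if (i : ℕ) = j then 1 else 0)

def beta (n k : ℕ) : Fin n → ℤ := fun i => if (i : ℕ) < k then 1 else 0

def basisVec (n k : ℕ) (j : Fin n) : Fin n → ℤ :=
  if (j : ℕ) < n - 1 then alpha n j else beta n k

def prefixSum (m : ℕ) (x : Fin n → ℤ) : ℤ :=
  ∑ i ∈ Finset.univ.filter (fun i : Fin n => (i : ℕ) < m), x i

theorem prefixSum_of_le {m : ℕ} (hm : n ≤ m) (x : Fin n → ℤ) : prefixSum m x = ∑ i, x i := by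
  rw [prefixSum, Finset.filter_true_of_mem fun i _ => by omega]

theorem prefixSum_succ_sub (x : Fin n → ℤ) (i : Fin n) :
    prefixSum ((i : ℕ) + 1) x - prefixSum i x = x i := by
  rw [prefixSum, prefixSum, Finset.sum_filter, Finset.sum_filter, ← Finset.sum_sub_distrib,
    ← sum_ite_val_eq x i.2]
  refine Finset.sum_congr rfl fun j _ => ?_
  split_ifs <;> omega

theorem eq_of_prefixSum_eq {x y : Fin n → ℤ} (h : ∀ m ≤ n, prefixSum m x = prefixSum m y) :
    x = y := by
  funext i
  rw [← prefixSum_succ_sub x i, ← prefixSum_succ_sub y i, h _ i.2, h _ i.2.le]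

theorem prefixSum_sum_smul {ι : Type*} [Fintype ι] (m : ℕ) (c : ι → ℤ) (w : ι → Fin n → ℤ) :
    prefixSum m (∑ j, c j • w j) = ∑ j, c j * prefixSum m (w j) :=
  sum_apply_sum_smul _ _ _

theorem prefixSum_alpha {j : ℕ} (hj : j + 1 < n) (m : ℕ) :
    prefixSum m (alpha n j) = if m = j + 1 then -1 else 0 := by
  have hsplit : ∀ i : Fin n, (if (i : ℕ) < m then alpha n j i else 0) =
      (if (i : ℕ) = j + 1 then (if j + 1 < m then 1 else 0) else 0) -
        (if (i : ℕ) = j then (if j < m then 1 else 0) else 0) := by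
    intro i
    simp only [alpha]
    split_ifs <;> omega
  rw [prefixSum, Finset.sum_filter, Finset.sum_congr rfl fun i _ => hsplit i,
    Finset.sum_sub_distrib, sum_ite_val_eq _ hj, sum_ite_val_eq _ (by omega : j < n)]
  split_ifs <;> omega

theorem prefixSum_beta (hk : k ≤ n) (m : ℕ) : prefixSum m (beta n k) = min m k := by
  simp only [prefixSum, beta]
  rw [Finset.sum_boole, Finset.filter_filter,
    Finset.filter_congr fun i _ => lt_min_iff.symm, Fin.card_filter_val_lt]
  omega

theorem prefixSum_basisVec (hk : k ≤ n) (j : Fin n) (m : ℕ) :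
    prefixSum m (basisVec n k j) =
      if (j : ℕ) < n - 1 then (if m = (j : ℕ) + 1 then -1 else 0) else ((min m k : ℕ) : ℤ) := by
  by_cases hj : (j : ℕ) < n - 1
  · rw [basisVec, if_pos hj, if_pos hj]
    exact prefixSum_alpha (by omega) m
  · rw [basisVec, if_neg hj, if_neg hj]
    exact prefixSum_beta hk m

theorem sum_basisVec (hk : k ≤ n) (j : Fin n) :
    ∑ i, basisVec n k j i = if (j : ℕ) < n - 1 then 0 else (k : ℤ) := by
  rw [← prefixSum_of_le le_rfl, prefixSum_basisVec hk]
  split_ifs <;> omega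

theorem prefixSum_sum_smul_basisVec (hkn : k < n) (c : Fin n → ℤ) (m : ℕ) :
    prefixSum m (∑ j, c j • basisVec n k j) =
      (min m k : ℕ) * c ⟨n - 1, by omega⟩ -
        ∑ j : Fin n, if (j : ℕ) + 1 = m ∧ (j : ℕ) < n - 1 then c j else 0 := by
  have hterm : ∀ j : Fin n, c j * prefixSum m (basisVec n k j) =
      (if (j : ℕ) = n - 1 then (min m k : ℕ) * c j else 0) -
        (if (j : ℕ) + 1 = m ∧ (j : ℕ) < n - 1 then c j else 0) := by
    intro j
    rw [prefixSum_basisVec hkn.le]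
    have := j.2
    split_ifs <;> first | (exfalso; omega) | ring
  rw [prefixSum_sum_smul, Finset.sum_congr rfl fun j _ => hterm j, Finset.sum_sub_distrib,
    sum_ite_val_eq _ (by omega)]

theorem sum_sum_smul_basisVec (hkn : k < n) (c : Fin n → ℤ) :
    ∑ i, (∑ j, c j • basisVec n k j) i = k * c ⟨n - 1, by omega⟩ := by
  rw [← prefixSum_of_le le_rfl, prefixSum_sum_smul_basisVec hkn,
    Finset.sum_eq_zero fun j _ => if_neg (by omega), min_eq_right hkn.le, sub_zero]

theorem prefixSum_succ_sum_smul_basisVec (hkn : k < n) (c : Fin n → ℤ) (j : Fin n)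
    (hj : (j : ℕ) < n - 1) :
    prefixSum ((j : ℕ) + 1) (∑ l, c l • basisVec n k l) =
      (min ((j : ℕ) + 1) k : ℕ) * c ⟨n - 1, by omega⟩ - c j := by
  rw [prefixSum_sum_smul_basisVec hkn]
  congr 1
  rw [Finset.sum_eq_single_of_mem j (Finset.mem_univ _) fun l _ hl => if_neg ?_, if_pos ⟨rfl, hj⟩]
  exact fun h => hl (Fin.ext (by omega))

def grading (k : ℕ) (x : Fin n → ℤ) : ℤ := (∑ i, x i) / k

theorem grading_sum_smul_basisVec (hk : 0 < k) (hkn : k < n) (c : Fin n → ℤ) :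
    grading k (∑ j, c j • basisVec n k j) = c ⟨n - 1, by omega⟩ := by
  rw [grading, sum_sum_smul_basisVec hkn, Int.mul_ediv_cancel_left _ (by omega)]

def coeffs (n k : ℕ) (x : Fin n → ℤ) (j : Fin n) : ℤ :=
  if (j : ℕ) < n - 1 then (min ((j : ℕ) + 1) k : ℕ) * grading k x - prefixSum ((j : ℕ) + 1) x
  else grading k x

theorem eq_coeffs_of_eq_sum_smul (hk : 0 < k) (hkn : k < n) {x c : Fin n → ℤ}
    (hx : x = ∑ j, c j • basisVec n k j) : c = coeffs n k x := by
  funext j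
  subst hx
  rw [coeffs, grading_sum_smul_basisVec hk hkn]
  split_ifs with hj
  · rw [prefixSum_succ_sum_smul_basisVec hkn c j hj]
    ring
  · exact congrArg c (Fin.ext (by have := j.2; dsimp only; omega))

theorem sum_smul_coeffs (hkn : k < n) {x : Fin n → ℤ} (hx : (k : ℤ) ∣ ∑ i, x i) :
    ∑ j, coeffs n k x j • basisVec n k j = x := by
  refine eq_of_prefixSum_eq fun m hm => ?_
  rcases Nat.lt_or_ge m n with hmn | hmn
  · cases m with
    | zero => simp [prefixSum]
    | succ j =>
      have hj : j < n - 1 := by omega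
      rw [prefixSum_succ_sum_smul_basisVec hkn _ ⟨j, by omega⟩ hj]
      simp only [coeffs, hj, lt_irrefl, if_true, if_false]
      ring
  · rw [prefixSum_of_le hmn, prefixSum_of_le hmn, sum_sum_smul_basisVec hkn, coeffs,
      if_neg (lt_irrefl _), grading, Int.mul_ediv_cancel' hx]

def quadForm (k : ℕ) (x : Fin n → ℤ) : ℤ := ∑ i, x i ^ 2 + (2 - k) * grading k x ^ 2

def polarForm (k : ℕ) (u w : Fin n → ℤ) : ℤ :=
  u ⬝ᵥ w + (2 - k) * (grading k u * grading k w)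

theorem grading_add {u : Fin n → ℤ} (hu : (k : ℤ) ∣ ∑ i, u i) (w : Fin n → ℤ) :
    grading k (u + w) = grading k u + grading k w := by
  simp only [grading, Pi.add_apply, Finset.sum_add_distrib]
  exact Int.add_ediv_of_dvd_left hu

theorem quadForm_add_sub {u : Fin n → ℤ} (hu : (k : ℤ) ∣ ∑ i, u i) (w : Fin n → ℤ) :
    quadForm k (u + w) - quadForm k u - quadForm k w = 2 * polarForm k u w := by
  have hsq : ∑ i, (u + w) i ^ 2 = ∑ i, u i ^ 2 + 2 * (u ⬝ᵥ w) + ∑ i, w i ^ 2 := by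
    simp only [Pi.add_apply, dotProduct, Finset.mul_sum, ← Finset.sum_add_distrib]
    exact Finset.sum_congr rfl fun i _ => by ring
  rw [quadForm, quadForm, quadForm, polarForm, grading_add hu, hsq]
  ring

theorem alpha_dotProduct {j : ℕ} (hj : j + 1 < n) (f : Fin n → ℤ) :
    alpha n j ⬝ᵥ f = f ⟨j + 1, hj⟩ - f ⟨j, by omega⟩ := by
  simp only [dotProduct, alpha, sub_mul, ite_mul, one_mul, zero_mul, Finset.sum_sub_distrib]
  rw [sum_ite_val_eq _ hj, sum_ite_val_eq]

theorem beta_dotProduct_beta (hk : k ≤ n) : beta n k ⬝ᵥ beta n k = k := by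
  have hidem : ∀ i, beta n k i * beta n k i = beta n k i := fun i => by
    unfold beta
    split_ifs <;> rfl
  rw [dotProduct, Finset.sum_congr rfl fun i _ => hidem i, ← prefixSum_of_le le_rfl,
    prefixSum_beta hk, min_eq_right hk]

theorem grading_basisVec (hk : 0 < k) (hkn : k ≤ n) (j : Fin n) :
    grading k (basisVec n k j) = if (j : ℕ) < n - 1 then 0 else 1 := by
  rw [grading, sum_basisVec hkn]
  split_ifs
  · exact Int.zero_ediv _
  · exact Int.ediv_self (by omega)

def cartan (n k : ℕ) (i j : Fin n) : ℤ :=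
  if i = j then 2
  else if (((i : ℕ) < n - 1 ∧ (j : ℕ) < n - 1) ∧
            ((i : ℕ) + 1 = (j : ℕ) ∨ (j : ℕ) + 1 = (i : ℕ))) ∨
          ((i : ℕ) = n - 1 ∧ (j : ℕ) + 1 = k) ∨
          ((j : ℕ) = n - 1 ∧ (i : ℕ) + 1 = k) then -1
  else 0

theorem cartan_comm (i j : Fin n) : cartan n k i j = cartan n k j i := by
  simp only [cartan, Fin.ext_iff]
  split_ifs <;> omega

theorem alpha_dotProduct_basisVec (i j : Fin n) (hi : (i : ℕ) < n - 1) :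
    basisVec n k i ⬝ᵥ basisVec n k j = cartan n k i j := by
  rw [basisVec, if_pos hi, alpha_dotProduct (by omega)]
  have hjn := j.2
  by_cases hj : (j : ℕ) < n - 1
  · simp only [cartan, basisVec, if_pos hj, alpha, Fin.ext_iff]
    split_ifs <;> omega
  · simp only [cartan, basisVec, if_neg hj, beta, Fin.ext_iff]
    split_ifs <;> omega

theorem polarForm_basisVec (hk : 0 < k) (hkn : k < n) (i j : Fin n) :
    polarForm k (basisVec n k i) (basisVec n k j) = cartan n k i j := by
  rw [polarForm, grading_basisVec hk hkn.le, grading_basisVec hk hkn.le]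
  by_cases hi : (i : ℕ) < n - 1
  · rw [if_pos hi, alpha_dotProduct_basisVec i j hi]
    ring
  by_cases hj : (j : ℕ) < n - 1
  · rw [if_pos hj, dotProduct_comm, alpha_dotProduct_basisVec j i hj, cartan_comm]
    ring
  have hij : i = j := Fin.ext (by omega)
  subst hij
  rw [if_neg hi, basisVec, if_neg hi, beta_dotProduct_beta hkn.le, cartan, if_pos rfl]
  ring

theorem quadForm_indicator (hk : 0 < k) {I : Finset (Fin n)} (hI : I.card = k) :
    quadForm k (fun i => if i ∈ I then 1 else 0) = 2 := by
  have hsum : ∑ i, (if i ∈ I then (1 : ℤ) else 0) = k := by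
    rw [Finset.sum_boole, Finset.filter_mem_eq_inter, Finset.univ_inter, hI]
  have hsq : ∑ i, (if i ∈ I then (1 : ℤ) else 0) ^ 2 = k := by
    rw [← hsum]
    exact Finset.sum_congr rfl fun i _ => by split_ifs <;> norm_num
  rw [quadForm, grading, hsq, hsum, Int.ediv_self (by omega)]
  ring

end JLattice

open JLattice in
/-- The vectors `α_1, …, α_{n-1}, β_{[n]}` form a `ℤ`-basis of the lattice
`ℤⁿ(k) = {x : Σᵢ xᵢ ≡ 0 mod k}`; with respect to this basis the symmetric bilinear
form `b` associated to `q` has Gram matrix the Cartan matrix of the graph `J_{k,n}`;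
the grading `δ` of `Σ c_j v_j` is the coefficient `c_n`; and `q(β_I) = 2` for every
`k`-element subset `I ⊆ {1, …, n}`. -/
theorem statement_18
    (n k : ℕ) (hk1 : 1 ≤ k) (hkn : k ≤ n - 1)
    (L : Set (Fin n → ℤ)) (hL : L = {x | (k : ℤ) ∣ ∑ i, x i})
    (δ : (Fin n → ℤ) → ℤ) (hδ : ∀ x, δ x = (∑ i, x i) / (k : ℤ))
    (q : (Fin n → ℤ) → ℤ)
    (hq : ∀ x, q x = (∑ i, (x i) ^ 2) + (2 - (k : ℤ)) * (δ x) ^ 2)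
    (b : (Fin n → ℤ) → (Fin n → ℤ) → ℤ)
    (hb : ∀ u v, b u v = (q (u + v) - q u - q v) / 2)
    -- `v j` is `α_{j+1} = e_{j+2} - e_{j+1}` (1-indexed) for `j < n-1`,
    -- and `v (n-1) = β_{[n]} = e_1 + ⋯ + e_k`.
    (v : Fin n → (Fin n → ℤ))
    (hv : ∀ j : Fin n, v j =
      if (j : ℕ) < n - 1 then
        (fun i : Fin n => (if (i : ℕ) = (j : ℕ) + 1 then 1 else 0) -
          (if (i : ℕ) = (j : ℕ) then 1 else 0))
      else (fun i : Fin n => if (i : ℕ) < k then 1 else 0))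
    -- the Cartan matrix of the graph `J_{k,n}` (0-indexed: the node `n-1` is the
    -- extra node, joined to the node `k-1`, i.e. to `v_k` in 1-indexed notation)
    (C : Fin n → Fin n → ℤ)
    (hC : ∀ i j : Fin n, C i j =
      if i = j then 2
      else if (((i : ℕ) < n - 1 ∧ (j : ℕ) < n - 1) ∧
                ((i : ℕ) + 1 = (j : ℕ) ∨ (j : ℕ) + 1 = (i : ℕ))) ∨
              ((i : ℕ) = n - 1 ∧ (j : ℕ) + 1 = k) ∨
              ((j : ℕ) = n - 1 ∧ (i : ℕ) + 1 = k) then -1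
      else 0) :
    (∀ j, v j ∈ L) ∧
    (∀ u ∈ L, ∀ w ∈ L, (2 : ℤ) ∣ (q (u + w) - q u - q w)) ∧
    (∀ x ∈ L, ∃! c : Fin n → ℤ, x = ∑ j, c j • v j) ∧
    (∀ i j, b (v i) (v j) = C i j) ∧
    (∀ c : Fin n → ℤ, δ (∑ j, c j • v j) = c ⟨n - 1, by omega⟩) ∧
    (∀ I : Finset (Fin n), I.card = k →
      q (fun i => if i ∈ I then 1 else 0) = 2) := by
  have hkn' : k < n := by omega
  subst hL
  obtain rfl : δ = grading k := funext hδ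
  obtain rfl : q = quadForm k := funext hq
  obtain rfl : v = basisVec n k := funext fun j => by rw [hv j]; rfl
  obtain rfl : C = cartan n k := funext fun i => funext (hC i)
  have hmem : ∀ j, (k : ℤ) ∣ ∑ i, basisVec n k j i := fun j => by
    rw [sum_basisVec hkn'.le]
    split_ifs <;> simp
  refine ⟨hmem, fun u hu w _ => ⟨_, quadForm_add_sub hu w⟩,
    fun x hx => ⟨coeffs n k x, (sum_smul_coeffs hkn' hx).symm,
      fun c hc => eq_coeffs_of_eq_sum_smul hk1 hkn' hc⟩,
    fun i j => ?_, grading_sum_smul_basisVec hk1 hkn', fun I hI => quadForm_indicator hk1 hI⟩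
  rw [hb, quadForm_add_sub (hmem i), Int.mul_ediv_cancel_left _ two_ne_zero,
    polarForm_basisVec hk1 hkn']
end

section
/- Let Q₀ be a finite set, B : Q₀ × Q₀ → ℤ a skew-symmetric integer matrix, Λ an additive abelian group, and d : Q₀ → Λ a balanced assignment, i.e. for every vertex v: Σᵢ [B_{iv}]₊ · dᵢ = Σᵢ [B_{vi}]₊ · dᵢ (where [x]₊ = max(x,0) and the dot denotes the ℤ-action on Λ). Fix m ∈ Q₀ and define the mutated matrix B′ = μ_m(B) by B′_{ij} = −B_{ij} if i = m or j = m, and B′_{ij} = B_{ij} + [B_{im}]₊[B_{mj}]₊ − [−B_{im}]₊[−B_{mj}]₊ otherwise, and the mutated assignment d′ by d′_m = (Σᵢ [B_{im}]₊ · dᵢ) − d_m and d′_i = d_i for i ≠ m. Then B′ is skew-symmetric and d′ is balanced for B′. (This is the inductive step showing that all cluster variables of the Grassmannian cluster algebra are multihomogeneous: seeds of torus eigenfunctions with balanced multidegrees remain so under mutation.) -/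
/-!
Skew-symmetry turns the balancing condition at `v` into the linear equation
`∑ i, B i v • d i = 0`. After mutating at `m`, the new equation at `m` is the negative of the
old one. At `v ≠ m` the new equation is the old one plus the correction terms
`[B m v]₊ • S - [B v m]₊ • S - B m v • S`, where
`S = ∑ i, [B i m]₊ • d i = ∑ i, [B m i]₊ • d i` is the common value of both sides of the old
balancing condition at `m`; the correction vanishes because `[x]₊ - [-x]₊ = x`.
-/

namespace ClusterMutation

variable {Q : Type*} {Λ : Type*} [AddCommGroup Λ]

def IsSkew (B : Q → Q → ℤ) : Prop := ∀ i j, B j i = -B i j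

def IsBalanced [Fintype Q] (B : Q → Q → ℤ) (d : Q → Λ) : Prop :=
  ∀ v, ∑ i, max (B i v) 0 • d i = ∑ i, max (B v i) 0 • d i

def mutation [DecidableEq Q] (B : Q → Q → ℤ) (m : Q) : Q → Q → ℤ := fun i j =>
  if i = m ∨ j = m then -B i j
  else B i j + max (B i m) 0 * max (B m j) 0 - max (-B i m) 0 * max (-B m j) 0

def degreeMutation [Fintype Q] [DecidableEq Q] (B : Q → Q → ℤ) (d : Q → Λ) (m : Q) :
    Q → Λ :=
  Function.update d m ((∑ i, max (B i m) 0 • d i) - d m)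

variable {B : Q → Q → ℤ}

theorem IsSkew.apply_self_eq_zero (hB : IsSkew B) (i : Q) : B i i = 0 := by
  have := hB i i
  omega

theorem IsSkew.max_zero_sub_max_zero (hB : IsSkew B) (i j : Q) :
    max (B i j) 0 - max (B j i) 0 = B i j := by
  have := hB i j
  omega

theorem IsSkew.isBalanced_iff [Fintype Q] (hB : IsSkew B) (d : Q → Λ) :
    IsBalanced B d ↔ ∀ v, ∑ i, B i v • d i = 0 := by
  refine forall_congr' fun v => ?_
  rw [← sub_eq_zero, ← Finset.sum_sub_distrib]
  simp only [← sub_smul, hB.max_zero_sub_max_zero]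

variable [DecidableEq Q]

theorem isSkew_mutation (hB : IsSkew B) (m : Q) : IsSkew (mutation B m) := by
  intro i j
  by_cases h : i = m ∨ j = m
  · simp only [mutation, if_pos h, if_pos h.symm, hB i j]
  · simp only [mutation, if_neg h, if_neg (by tauto : ¬(j = m ∨ i = m)),
      hB i j, hB i m, hB m j, neg_neg]
    ring

variable [Fintype Q]

theorem mutation_smul_degreeMutation_of_ne (hB : IsSkew B) (d : Q → Λ) {m v : Q}
    (hv : v ≠ m) (i : Q) :
    mutation B m i v • degreeMutation B d m i =
      B i v • d i + max (B m v) 0 • (max (B i m) 0 • d i)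
        - max (B v m) 0 • (max (B m i) 0 • d i)
        - if i = m then B m v • ∑ k, max (B k m) 0 • d k else 0 := by
  by_cases hi : i = m
  · subst hi
    simp only [mutation, degreeMutation, hB.apply_self_eq_zero, neg_zero, max_self, true_or,
      if_true, Function.update_self]
    module
  · simp only [mutation, degreeMutation, if_neg hi, if_neg (not_or.2 ⟨hi, hv⟩),
      Function.update_of_ne hi, ← hB i m, ← hB m v]
    module

theorem sum_mutation_smul_degreeMutation (hB : IsSkew B) {d : Q → Λ}
    (hd : ∀ v, ∑ i, B i v • d i = 0) (m v : Q) :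
    ∑ i, mutation B m i v • degreeMutation B d m i = 0 := by
  by_cases hv : v = m
  · subst hv
    have hterm (i : Q) : mutation B v i v • degreeMutation B d v i = -(B i v • d i) := by
      by_cases hi : i = v
      · simp [hi, mutation, hB.apply_self_eq_zero]
      · simp [mutation, degreeMutation, Function.update_of_ne hi]
    simp [hterm, hd v]
  · have hbal_m : ∑ i, max (B m i) 0 • d i = ∑ i, max (B i m) 0 • d i :=
      ((hB.isBalanced_iff d).2 hd m).symm
    simp only [mutation_smul_degreeMutation_of_ne hB d hv, Finset.sum_sub_distrib,
      Finset.sum_add_distrib, ← Finset.smul_sum, Finset.sum_ite_eq', Finset.mem_univ, if_true,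
      hd v, hbal_m]
    rw [zero_add, ← sub_smul, hB.max_zero_sub_max_zero, sub_self]

theorem isBalanced_degreeMutation (hB : IsSkew B) {d : Q → Λ} (hd : IsBalanced B d) (m : Q) :
    IsBalanced (mutation B m) (degreeMutation B d m) :=
  ((isSkew_mutation hB m).isBalanced_iff _).2
    (sum_mutation_smul_degreeMutation hB ((hB.isBalanced_iff d).1 hd) m)

end ClusterMutation

open ClusterMutation in
/-- Fomin–Zelevinsky mutation preserves skew-symmetry and preserves balanced
assignments of multidegrees: if `d` is balanced for the skew-symmetric matrix `B`,
then the mutated assignment `d'` is balanced for the mutated matrix `B' = μ_m(B)`.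
(This is the inductive step showing that all cluster variables of the Grassmannian
cluster algebra are multihomogeneous.) -/
theorem statement_19
    (Q₀ : Type) [Fintype Q₀] [DecidableEq Q₀] (Λ : Type) [AddCommGroup Λ]
    (B : Q₀ → Q₀ → ℤ) (hskew : ∀ i j, B j i = - B i j)
    (d : Q₀ → Λ)
    (hbal : ∀ v : Q₀, ∑ i, (max (B i v) 0) • d i = ∑ i, (max (B v i) 0) • d i)
    (m : Q₀)
    (B' : Q₀ → Q₀ → ℤ)
    (hB' : ∀ i j, B' i j =
      if i = m ∨ j = m then - B i j
      else B i j + max (B i m) 0 * max (B m j) 0 - max (- B i m) 0 * max (- B m j) 0)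
    (d' : Q₀ → Λ)
    (hd'm : d' m = (∑ i, (max (B i m) 0) • d i) - d m)
    (hd' : ∀ i, i ≠ m → d' i = d i) :
    (∀ i j, B' j i = - B' i j) ∧
    (∀ v : Q₀, ∑ i, (max (B' i v) 0) • d' i = ∑ i, (max (B' v i) 0) • d' i) := by
  have hB'_eq : B' = mutation B m := funext₂ hB'
  have hd'_eq : d' = degreeMutation B d m := by
    funext i
    by_cases hi : i = m
    · subst hi
      simp [degreeMutation, hd'm]
    · simp [degreeMutation, Function.update_of_ne hi, hd' i hi]
  have hB : IsSkew B := hskew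
  subst hB'_eq hd'_eq
  exact ⟨isSkew_mutation hB m, isBalanced_degreeMutation hB hbal m⟩
end
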